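/- For every q ∈ (−1+β₂, α−β₂), the integral C(α,q,B) = ∫_{ℝ^{d−1}} ∫_0^1 (s^q − 1)(1 − s^{α−q−1}) (1−s)^{−1−α} B(((1−s)ũ, 1), (0̃, s)) (|ũ|² + 1)^{−(d+α)/2} ds dũ converges absolutely, so C(α,q,B) is a well-defined real number; moreover C(α,q,B) = 0 if and only if q ∈ {0, α−1}. -/

import Mathlib

open MeasureTheory

/-- The Euclidean norm on `ℝ^{m} × ℝ`, viewed as `ℝ^{m+1}`. -/
noncomputable def nrm {m : ℕ} (x : EuclideanSpace ℝ (Fin m) × ℝ) : ℝ :=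
  Real.sqrt (‖x.1‖ ^ 2 + x.2 ^ 2)

/-- The integrand of the constant `C(α,q,B)` in dimension `d = n + 2`, as a function of
`p = (ũ, s) ∈ ℝ^{d-1} × ℝ`. -/
noncomputable def CconstIntegrand (n : ℕ) (α q : ℝ)
    (B : (EuclideanSpace ℝ (Fin (n + 1)) × ℝ) → (EuclideanSpace ℝ (Fin (n + 1)) × ℝ) → ℝ)
    (p : EuclideanSpace ℝ (Fin (n + 1)) × ℝ) : ℝ :=
  (p.2 ^ q - 1) * (1 - p.2 ^ (α - q - 1)) / (1 - p.2) ^ (1 + α) *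
    B ((1 - p.2) • p.1, 1) (0, p.2) / (‖p.1‖ ^ 2 + 1) ^ (((n : ℝ) + 2 + α) / 2)

/-- The constant `C(α,q,B)` in dimension `d = n + 2`. -/
noncomputable def Cconst (n : ℕ) (α q : ℝ)
    (B : (EuclideanSpace ℝ (Fin (n + 1)) × ℝ) → (EuclideanSpace ℝ (Fin (n + 1)) × ℝ) → ℝ) : ℝ :=
  ∫ p in (Set.univ ×ˢ Set.Ioo (0 : ℝ) 1 :
      Set (EuclideanSpace ℝ (Fin (n + 1)) × ℝ)), CconstIntegrand n α q B p

lemma abs_rpow_sub_one_le (c : ℝ) {s : ℝ} (h0 : 0 < s) (h1 : s < 1) :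
    |s ^ c - 1| ≤ 2 * s ^ min c 0 := by
  rcases le_or_gt 0 c with hc | hc
  · have hle : s ^ c ≤ 1 := Real.rpow_le_one h0.le h1.le hc
    have h1' : (1:ℝ) ≤ s ^ min c 0 := by
      rcases eq_or_lt_of_le hc with h | h
      · simp [← h]
      · simp [min_eq_right hc]
    rw [abs_sub_comm, abs_of_nonneg (by linarith)]
    nlinarith [Real.rpow_nonneg h0.le c]
  · have hge : (1:ℝ) ≤ s ^ c :=
      (Real.one_le_rpow_of_pos_of_le_one_of_nonpos h0 h1.le hc.le)
    rw [abs_of_nonneg (by linarith), min_eq_left hc.le]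
    nlinarith

lemma abs_rpow_sub_one_le' (c : ℝ) {s : ℝ} (h0 : 0 < s) (h1 : s < 1) :
    |s ^ c - 1| ≤ |c| * ((1 - s) * s ^ min (c - 1) 0) := by
  have hcont : ContinuousOn (fun x : ℝ => x ^ c) (Set.Icc s 1) := by
    apply ContinuousOn.rpow_const continuousOn_id
    intro x hx
    exact Or.inl (by nlinarith [hx.1] : x ≠ 0)
  have hderiv : ∀ x ∈ Set.Ioo s 1, HasDerivAt (fun x : ℝ => x ^ c) (c * x ^ (c - 1)) x :=
    fun x hx => Real.hasDerivAt_rpow_const (Or.inl (by nlinarith [hx.1] : x ≠ 0))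
  obtain ⟨ξ, hξ, hslope⟩ := exists_hasDerivAt_eq_slope (fun x : ℝ => x ^ c)
    (fun x => c * x ^ (c - 1)) h1 hcont hderiv
  have hξ0 : 0 < ξ := lt_trans h0 hξ.1
  have key : s ^ c - 1 = c * ξ ^ (c - 1) * (s - 1) := by
    have hs1 : (1:ℝ) - s ≠ 0 := by linarith
    rw [Real.one_rpow] at hslope
    field_simp at hslope
    nlinarith [hslope]
  rw [key, abs_mul, abs_mul]
  have hb : ξ ^ (c - 1) ≤ s ^ min (c - 1) 0 := by
    rcases le_or_gt 0 (c - 1) with h | h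
    · rw [min_eq_right h]
      calc ξ ^ (c - 1) ≤ 1 := Real.rpow_le_one hξ0.le hξ.2.le h
        _ = s ^ (0:ℝ) := by rw [Real.rpow_zero]
    · rw [min_eq_left h.le]
      exact Real.rpow_le_rpow_of_nonpos h0 hξ.1.le h.le
  have h2 : |ξ ^ (c - 1)| = ξ ^ (c - 1) := abs_of_nonneg (Real.rpow_nonneg hξ0.le _)
  have h3 : |s - 1| = 1 - s := by rw [abs_sub_comm]; exact abs_of_nonneg (by linarith)
  rw [h2, h3]
  have := Real.rpow_nonneg h0.le (min (c-1) 0)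
  calc |c| * ξ ^ (c - 1) * (1 - s) ≤ |c| * s ^ min (c-1) 0 * (1 - s) := by
        apply mul_le_mul_of_nonneg_right (mul_le_mul_of_nonneg_left hb (abs_nonneg c)) (by linarith)
    _ = |c| * ((1 - s) * s ^ min (c - 1) 0) := by ring

noncomputable def Kprod (α q : ℝ) : ℝ :=
  16 + |q| * |α - q - 1| * (2:ℝ) ^ (-(min (q-1) 0 + min (α-q-2) 0))

lemma prod_bound (α q : ℝ) {s : ℝ} (h0 : 0 < s) (h1 : s < 1) :
    |(s ^ q - 1) * (1 - s ^ (α - q - 1))| ≤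
      Kprod α q * s ^ (min q 0 + min (α - q - 1) 0) * (1 - s) ^ 2 := by
  set r := α - q - 1 with hr
  have habs : |(s ^ q - 1) * (1 - s ^ r)| = |s ^ q - 1| * |s ^ r - 1| := by
    rw [abs_mul, abs_sub_comm (1:ℝ)]
  have hsa : (0:ℝ) < s ^ (min q 0 + min r 0) := Real.rpow_pos_of_pos h0 _
  have hsplit : s ^ (min q 0 + min r 0) = s ^ min q 0 * s ^ min r 0 := Real.rpow_add h0 _ _
  have hK2 : (0:ℝ) ≤ |q| * |r| * (2:ℝ) ^ (-(min (q-1) 0 + min (r-1) 0)) := by positivity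
  have hr2 : α - q - 2 = r - 1 := by rw [hr]; ring
  rcases le_or_gt s (1/2) with hs | hs
  · have b1 := abs_rpow_sub_one_le q h0 h1
    have b2 := abs_rpow_sub_one_le r h0 h1
    have h4 : |s ^ q - 1| * |s ^ r - 1| ≤ 4 * s ^ (min q 0 + min r 0) := by
      rw [hsplit]
      have := Real.rpow_nonneg h0.le (min q 0)
      have := Real.rpow_nonneg h0.le (min r 0)
      nlinarith [abs_nonneg (s ^ q - 1), abs_nonneg (s ^ r - 1)]
    have hfourth : (1/4 : ℝ) ≤ (1 - s) ^ 2 := by nlinarith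
    rw [habs, Kprod, hr2, ← hr]
    nlinarith [sq_nonneg (1 - s), mul_le_mul_of_nonneg_left hfourth
      (by positivity : (0:ℝ) ≤ 16 * s ^ (min q 0 + min r 0)),
      mul_nonneg (mul_nonneg hK2 hsa.le) (sq_nonneg (1-s))]
  · have b1 := abs_rpow_sub_one_le' q h0 h1
    have b2 := abs_rpow_sub_one_le' r h0 h1
    set b := min (q-1) 0 + min (r-1) 0 with hb
    have hbneg : b ≤ 0 := by
      have := min_le_right (q-1) (0:ℝ); have := min_le_right (r-1) (0:ℝ); simp [hb]; linarith
    have hsb : s ^ b = s ^ min (q-1) 0 * s ^ min (r-1) 0 := Real.rpow_add h0 _ _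
    have hsb2 : s ^ b ≤ (2:ℝ) ^ (-b) := by
      calc s ^ b ≤ ((2:ℝ)⁻¹) ^ b :=
            Real.rpow_le_rpow_of_nonpos (by norm_num) (by linarith) hbneg
        _ = (2:ℝ) ^ (-b) := by
            rw [Real.inv_rpow (by norm_num), ← Real.rpow_neg (by norm_num)]
    have hsa1 : (1:ℝ) ≤ s ^ (min q 0 + min r 0) := by
      apply Real.one_le_rpow_of_pos_of_le_one_of_nonpos h0 h1.le
      have := min_le_right q (0:ℝ); have := min_le_right r (0:ℝ); linarith
    have hchain : |s ^ q - 1| * |s ^ r - 1| ≤ |q| * |r| * ((1-s)^2 * s ^ b) := by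
      have e1 : |q| * ((1 - s) * s ^ min (q-1) 0) * (|r| * ((1 - s) * s ^ min (r-1) 0))
          = |q| * |r| * ((1-s)^2 * s ^ b) := by rw [hsb]; ring
      calc |s ^ q - 1| * |s ^ r - 1|
          ≤ |q| * ((1 - s) * s ^ min (q-1) 0) * (|r| * ((1 - s) * s ^ min (r-1) 0)) := by
            apply mul_le_mul b1 b2 (abs_nonneg _) (mul_nonneg (abs_nonneg q)
              (mul_nonneg (by linarith) (Real.rpow_nonneg h0.le _)))
        _ = _ := e1
    rw [habs, Kprod, hr2]
    have h2b : (0:ℝ) < (2:ℝ) ^ (-b) := by positivity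
    have hsbpos : (0:ℝ) < s ^ b := Real.rpow_pos_of_pos h0 _
    nlinarith [sq_nonneg (1-s), mul_le_mul_of_nonneg_left hsb2 (mul_nonneg (abs_nonneg q) (abs_nonneg r)),
      mul_le_mul_of_nonneg_left hsa1 (mul_nonneg hK2 (sq_nonneg (1-s)))]

lemma B_bound {n : ℕ} {β₂ C₂ C₃ : ℝ} {Φ : ℝ → ℝ}
    {B : (EuclideanSpace ℝ (Fin (n + 1)) × ℝ) → (EuclideanSpace ℝ (Fin (n + 1)) × ℝ) → ℝ}
    (hβ₂0 : 0 ≤ β₂) (hC₂ : 0 < C₂) (hC₃ : 0 < C₃)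
    (hΦpos : ∀ t : ℝ, 0 ≤ t → 0 < Φ t)
    (hΦflat : ∀ t : ℝ, 0 ≤ t → t < 2 → Φ t = Φ 2)
    (hΦub : ∀ t : ℝ, 2 < t → Φ t / Φ 2 ≤ C₂ * (t / 2) ^ β₂)
    (hA3ub : ∀ x y : EuclideanSpace ℝ (Fin (n + 1)) × ℝ, 0 < x.2 → 0 < y.2 →
      B x y ≤ C₃ * Φ (nrm (x - y) ^ 2 / (x.2 * y.2)))
    (u : EuclideanSpace ℝ (Fin (n + 1))) {s : ℝ} (h0 : 0 < s) (h1 : s < 1) :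
    B ((1 - s) • u, 1) (0, s) ≤
      (C₃ * Φ 2 * (1 + C₂) * (2:ℝ) ^ β₂) * ((‖u‖ ^ 2 + 1) ^ β₂ * s ^ (-β₂)) := by
  set X : ℝ := ‖u‖ ^ 2 + 1 with hX
  have hX1 : (1:ℝ) ≤ X := by nlinarith [sq_nonneg ‖u‖]
  set x : EuclideanSpace ℝ (Fin (n + 1)) × ℝ := ((1 - s) • u, 1) with hx
  set y : EuclideanSpace ℝ (Fin (n + 1)) × ℝ := ((0 : EuclideanSpace ℝ (Fin (n + 1))), s) with hy
  have hxy1 : (x - y).1 = (1 - s) • u := by simp [hx, hy]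
  have hxy2 : (x - y).2 = 1 - s := by simp [hx, hy]
  have hnrm : nrm (x - y) ^ 2 = (1 - s) ^ 2 * X := by
    rw [nrm, hxy1, hxy2, Real.sq_sqrt (by positivity)]
    rw [norm_smul, Real.norm_eq_abs, abs_of_nonneg (by linarith), mul_pow]
    ring
  have harg : nrm (x - y) ^ 2 / (x.2 * y.2) = (1 - s) ^ 2 * X / s := by
    rw [hnrm, hx, hy]; norm_num
  set v : ℝ := X / s with hv
  have hv1 : (1:ℝ) ≤ v := by
    rw [hv, le_div_iff₀ h0]; nlinarith
  have htv : (1 - s) ^ 2 * X / s = (1 - s) ^ 2 * v := by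
    rw [hv]; ring
  set t : ℝ := (1 - s) ^ 2 * v with ht
  have ht0 : 0 ≤ t := by positivity
  have hΦ2 : 0 < Φ 2 := hΦpos 2 (by norm_num)
  have hone_le : (1:ℝ) ≤ (1 + t / 2) ^ β₂ := by
    calc (1:ℝ) = 1 ^ β₂ := (Real.one_rpow _).symm
      _ ≤ (1 + t/2) ^ β₂ := Real.rpow_le_rpow (by norm_num) (by linarith) hβ₂0
  have h1C : (1:ℝ) ≤ (1 + C₂) * (1 + t / 2) ^ β₂ := by nlinarith
  have hΦt : Φ t ≤ Φ 2 * ((1 + C₂) * (1 + t / 2) ^ β₂) := by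
    rcases le_or_gt t 2 with h | h
    · have heq : Φ t ≤ Φ 2 := by
        rcases eq_or_lt_of_le h with h | h
        · rw [h]
        · rw [hΦflat t ht0 h]
      calc Φ t ≤ Φ 2 := heq
        _ = Φ 2 * 1 := (mul_one _).symm
        _ ≤ Φ 2 * ((1 + C₂) * (1 + t / 2) ^ β₂) :=
            mul_le_mul_of_nonneg_left h1C hΦ2.le
    · have h2 := hΦub t h
      have hΦub' : Φ t ≤ Φ 2 * (C₂ * (t/2) ^ β₂) := by
        rw [div_le_iff₀ hΦ2] at h2; linarith [h2]
      have hm : (t/2) ^ β₂ ≤ (1 + t/2) ^ β₂ :=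
        Real.rpow_le_rpow (by linarith) (by linarith) hβ₂0
      have hp : (0:ℝ) ≤ (t/2) ^ β₂ := Real.rpow_nonneg (by linarith) _
      calc Φ t ≤ Φ 2 * (C₂ * (t/2) ^ β₂) := hΦub'
        _ ≤ Φ 2 * ((1 + C₂) * (1 + t / 2) ^ β₂) := by
            apply mul_le_mul_of_nonneg_left _ hΦ2.le
            exact mul_le_mul (by linarith) hm hp (by linarith)
  have hle2v : 1 + t / 2 ≤ 2 * v := by
    have hsq : (1 - s) ^ 2 ≤ 1 := by nlinarith
    have htle : t ≤ v := by
      rw [ht]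
      calc (1 - s) ^ 2 * v ≤ 1 * v := mul_le_mul_of_nonneg_right hsq (by linarith)
        _ = v := one_mul v
    linarith
  have hfinal : (1 + t / 2) ^ β₂ ≤ (2:ℝ) ^ β₂ * (X ^ β₂ * s ^ (-β₂)) := by
    calc (1 + t / 2) ^ β₂ ≤ (2 * v) ^ β₂ :=
          Real.rpow_le_rpow (by linarith) hle2v hβ₂0
      _ = (2:ℝ) ^ β₂ * v ^ β₂ := Real.mul_rpow (by norm_num) (by linarith)
      _ = (2:ℝ) ^ β₂ * (X ^ β₂ * s ^ (-β₂)) := by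
          rw [hv, Real.div_rpow (by linarith) h0.le, Real.rpow_neg h0.le, div_eq_mul_inv]
  have hB := hA3ub x y (by simp [hx]) (by simp [hy]; exact h0)
  rw [harg, htv] at hB
  calc B x y ≤ C₃ * Φ t := hB
    _ ≤ C₃ * (Φ 2 * ((1 + C₂) * (1 + t / 2) ^ β₂)) := by
        apply mul_le_mul_of_nonneg_left hΦt hC₃.le
    _ ≤ C₃ * (Φ 2 * ((1 + C₂) * ((2:ℝ) ^ β₂ * (X ^ β₂ * s ^ (-β₂))))) := by
        apply mul_le_mul_of_nonneg_left _ hC₃.le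
        apply mul_le_mul_of_nonneg_left _ hΦ2.le
        apply mul_le_mul_of_nonneg_left hfinal (by linarith)
    _ = (C₃ * Φ 2 * (1 + C₂) * (2:ℝ) ^ β₂) * (X ^ β₂ * s ^ (-β₂)) := by ring

/-- For `q ∈ (−1+β₂, α−β₂)` the integral defining `C(α,q,B)` converges
absolutely, and `C(α,q,B) = 0` iff `q ∈ {0, α−1}`. Here `d = n + 2 ≥ 2`. -/
theorem Cconst_wellDefined
    (n : ℕ) (α β₁ β₂ C₁ C₂ C₃ q : ℝ) (Φ : ℝ → ℝ)
    (B : (EuclideanSpace ℝ (Fin (n + 1)) × ℝ) → (EuclideanSpace ℝ (Fin (n + 1)) × ℝ) → ℝ)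
    (hα : 0 < α) (hα2 : α < 2)
    (hβ0 : 0 ≤ β₁) (hβ : β₁ ≤ β₂) (hβ₂ : β₂ < min 1 α)
    (hC₁ : 0 < C₁) (hC₂ : 0 < C₂)
    (hΦmeas : Measurable Φ)
    (hΦpos : ∀ t : ℝ, 0 ≤ t → 0 < Φ t)
    (hΦflat : ∀ t : ℝ, 0 ≤ t → t < 2 → Φ t = Φ 2)
    (hΦscale : ∀ r R : ℝ, 2 ≤ r → r < R →
      C₁ * (R / r) ^ β₁ ≤ Φ R / Φ r ∧ Φ R / Φ r ≤ C₂ * (R / r) ^ β₂)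
    (hBmeas : Measurable (Function.uncurry B))
    (hBpos : ∀ x y : EuclideanSpace ℝ (Fin (n + 1)) × ℝ, 0 < x.2 → 0 < y.2 → 0 < B x y)
    (hC₃ : 1 ≤ C₃)
    (hA3 : ∀ x y : EuclideanSpace ℝ (Fin (n + 1)) × ℝ, 0 < x.2 → 0 < y.2 →
      C₃⁻¹ * Φ (nrm (x - y) ^ 2 / (x.2 * y.2)) ≤ B x y ∧
      B x y ≤ C₃ * Φ (nrm (x - y) ^ 2 / (x.2 * y.2)))
    (hq1 : -1 + β₂ < q) (hq2 : q < α - β₂) :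
    IntegrableOn (CconstIntegrand n α q B)
      (Set.univ ×ˢ Set.Ioo (0 : ℝ) 1) ∧
    (Cconst n α q B = 0 ↔ q = 0 ∨ q = α - 1) := by
  have hβ₂1 : β₂ < 1 := lt_of_lt_of_le hβ₂ (min_le_left _ _)
  have hβ₂α : β₂ < α := lt_of_lt_of_le hβ₂ (min_le_right _ _)
  have hβ₂0 : 0 ≤ β₂ := le_trans hβ0 hβ
  have hC₃0 : 0 < C₃ := lt_of_lt_of_le one_pos hC₃
  have hΦ2 : 0 < Φ 2 := hΦpos 2 (by norm_num)
  set S : Set (EuclideanSpace ℝ (Fin (n+1)) × ℝ) := Set.univ ×ˢ Set.Ioo (0:ℝ) 1 with hSdef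
  have hS : MeasurableSet S := MeasurableSet.univ.prod measurableSet_Ioo
  set a : ℝ := min q 0 + min (α - q - 1) 0 with ha
  have ha1 : β₂ - 1 < a := by
    rcases le_or_gt q 0 with h | h <;> rcases le_or_gt (α - q - 1) 0 with h' | h'
    · rw [ha, min_eq_left h, min_eq_left h']; linarith
    · rw [ha, min_eq_left h, min_eq_right h'.le]; linarith
    · rw [ha, min_eq_right h.le, min_eq_left h']; linarith
    · rw [ha, min_eq_right h.le, min_eq_right h'.le]; linarith
  have ha0 : a ≤ 0 := by
    have h1 := min_le_right q (0:ℝ); have h2 := min_le_right (α - q - 1) (0:ℝ)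
    rw [ha]; linarith
  set D : ℝ := ((n:ℝ) + 2 + α)/2 with hD
  set KB : ℝ := C₃ * Φ 2 * (1 + C₂) * (2:ℝ) ^ β₂ with hKB
  have hKBpos : 0 < KB := by rw [hKB]; positivity
  have hKpos : 0 < Kprod α q := by rw [Kprod]; positivity
  set M : ℝ := Kprod α q * KB with hM
  -- measurability
  have hmeasB : Measurable fun p : EuclideanSpace ℝ (Fin (n+1)) × ℝ =>
      B ((1 - p.2) • p.1, 1) (0, p.2) := by
    have heq : (fun p : EuclideanSpace ℝ (Fin (n+1)) × ℝ => B ((1 - p.2) • p.1, 1) (0, p.2))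
        = (Function.uncurry B) ∘ (fun p => (((1 - p.2) • p.1, 1), (0, p.2))) := rfl
    rw [heq]
    exact hBmeas.comp ((((measurable_const.sub measurable_snd).smul
      measurable_fst).prodMk measurable_const).prodMk
      (measurable_const.prodMk measurable_snd))
  have hmeasf : Measurable (CconstIntegrand n α q B) := by
    unfold CconstIntegrand
    have m1 : Measurable fun p : EuclideanSpace ℝ (Fin (n+1)) × ℝ =>
        (p.2 ^ q - 1) * (1 - p.2 ^ (α - q - 1)) / (1 - p.2) ^ (1 + α) := by fun_prop
    have m2 : Measurable fun p : EuclideanSpace ℝ (Fin (n+1)) × ℝ =>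
        (‖p.1‖ ^ 2 + 1) ^ (((n:ℝ) + 2 + α)/2) := by fun_prop
    exact (m1.mul hmeasB).div m2
  -- pointwise bound
  have key : ∀ p : EuclideanSpace ℝ (Fin (n+1)) × ℝ, p ∈ S →
      |CconstIntegrand n α q B p| ≤
        M * ((‖p.1‖ ^ 2 + 1) ^ (β₂ - D) * (p.2 ^ (a - β₂) * (1 - p.2) ^ (1 - α))) := by
    rintro ⟨u, s⟩ hp
    obtain ⟨h0s, h1s⟩ : (0:ℝ) < s ∧ s < 1 := hp.2
    have h1s' : (0:ℝ) < 1 - s := by linarith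
    set X : ℝ := ‖u‖ ^ 2 + 1 with hX
    have hX0 : (0:ℝ) < X := by positivity
    have hd1 : (0:ℝ) < (1 - s) ^ (1 + α) := Real.rpow_pos_of_pos h1s' _
    have hd2 : (0:ℝ) < X ^ D := Real.rpow_pos_of_pos hX0 _
    have hP := prod_bound α q h0s h1s
    have hBb := B_bound hβ₂0 hC₂ hC₃0 hΦpos hΦflat
      (fun t ht => (hΦscale 2 t le_rfl ht).2) (fun x y hx hy => (hA3 x y hx hy).2) u h0s h1s
    have hBv0 : 0 ≤ B ((1-s) • u, 1) (0, s) := (hBpos _ _ (by norm_num) h0s).le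
    have habs : |CconstIntegrand n α q B (u, s)| =
        |(s ^ q - 1) * (1 - s ^ (α - q - 1))| / (1 - s) ^ (1 + α) *
          B ((1-s) • u, 1) (0, s) / X ^ D := by
      simp only [CconstIntegrand, hD, hX]
      rw [abs_div, abs_mul, abs_div, abs_of_pos (by positivity : (0:ℝ) < (‖u‖^2+1) ^ (((n:ℝ)+2+α)/2)),
        abs_of_pos hd1, abs_of_nonneg hBv0]
    rw [habs]
    have step : |(s ^ q - 1) * (1 - s ^ (α - q - 1))| / (1 - s) ^ (1 + α) *
          B ((1-s) • u, 1) (0, s) / X ^ D ≤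
        (Kprod α q * s ^ a * (1 - s) ^ 2) / (1 - s) ^ (1 + α) *
          (KB * (X ^ β₂ * s ^ (-β₂))) / X ^ D := by
      gcongr
    refine le_trans step (le_of_eq ?_)
    have e1 : ((1 - s) ^ 2 : ℝ) = (1-s) ^ (1-α) * (1-s) ^ (1+α) := by
      rw [← Real.rpow_natCast (1-s) 2, ← Real.rpow_add h1s']
      norm_num
    have he2 : β₂ - D + D = β₂ := by ring
    have e2 : X ^ (β₂ - D) * X ^ D = X ^ β₂ := by
      rw [← Real.rpow_add hX0, he2]
    have he3 : a + -β₂ = a - β₂ := by ring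
    have e3 : s ^ a * s ^ (-β₂) = s ^ (a - β₂) := by
      rw [← Real.rpow_add h0s, he3]
    rw [e1, ← e2, ← e3, hM]
    field_simp
  -- integrability of the dominating function
  have hrestr : (volume : Measure (EuclideanSpace ℝ (Fin (n+1)) × ℝ)).restrict S
      = ((volume : Measure (EuclideanSpace ℝ (Fin (n+1))))).prod
        ((volume : Measure ℝ).restrict (Set.Ioo 0 1)) := by
    rw [hSdef, Measure.volume_eq_prod, ← Measure.prod_restrict, Measure.restrict_univ]
  have hF : Integrable (fun u : EuclideanSpace ℝ (Fin (n+1)) => (‖u‖ ^ 2 + 1) ^ (β₂ - D)) := by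
    have hfr : (Module.finrank ℝ (EuclideanSpace ℝ (Fin (n+1))) : ℝ) = (n:ℝ) + 1 := by
      rw [finrank_euclideanSpace_fin]; push_cast; ring
    have hnr : (Module.finrank ℝ (EuclideanSpace ℝ (Fin (n+1))) : ℝ) < 2*D - 2*β₂ := by
      rw [hfr, hD]; linarith
    have h := integrable_rpow_neg_one_add_norm_sq (μ := (volume : Measure (EuclideanSpace ℝ (Fin (n+1))))) hnr
    have heq : (fun u : EuclideanSpace ℝ (Fin (n+1)) => (‖u‖ ^ 2 + 1) ^ (β₂ - D))
        = fun u : EuclideanSpace ℝ (Fin (n+1)) => ((1:ℝ) + ‖u‖ ^ 2) ^ (-(2*D - 2*β₂)/2) := by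
      funext u; rw [add_comm]; congr 1; ring
    rw [heq]; exact h
  have hp1 : (-1:ℝ) < a - β₂ := by linarith
  have hp1' : a - β₂ ≤ 0 := by linarith
  have hp2 : (-1:ℝ) < 1 - α := by linarith
  have hG : IntegrableOn (fun s : ℝ => s ^ (a - β₂) * (1 - s) ^ (1 - α)) (Set.Ioo 0 1) := by
    have hGmeas : Measurable fun s : ℝ => s ^ (a - β₂) * (1 - s) ^ (1 - α) := by fun_prop
    have hbase : IntegrableOn (fun s : ℝ => s ^ (a - β₂)) (Set.Ioc 0 (1/2)) := by
      have h := intervalIntegral.intervalIntegrable_rpow' (a := 0) (b := 1/2) hp1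
      rwa [intervalIntegrable_iff, Set.uIoc_of_le (by norm_num)] at h
    have hleft : IntegrableOn (fun s : ℝ => s ^ (a - β₂) * (1 - s) ^ (1 - α))
        (Set.Ioc 0 (1/2)) := by
      refine Integrable.mono' (hbase.const_mul (max 1 ((2:ℝ) ^ (α - 1))))
        hGmeas.aestronglyMeasurable.restrict ?_
      filter_upwards [ae_restrict_mem measurableSet_Ioc] with s hs
      obtain ⟨h0s, h12⟩ := hs
      have h1s' : (0:ℝ) < 1 - s := by linarith
      have hb : (1 - s) ^ (1 - α) ≤ max 1 ((2:ℝ) ^ (α - 1)) := by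
        rcases le_or_gt α 1 with h | h
        · refine le_trans (Real.rpow_le_one (by linarith) (by linarith) (by linarith))
            (le_max_left _ _)
        · have hA : (1-s) ^ (1-α) ≤ ((2:ℝ)⁻¹) ^ (1-α) :=
            Real.rpow_le_rpow_of_nonpos (by norm_num) (by linarith) (by linarith)
          have hBq : ((2:ℝ)⁻¹) ^ (1-α) = (2:ℝ) ^ (α-1) := by
            rw [Real.inv_rpow (by norm_num), ← Real.rpow_neg (by norm_num)]
            congr 1; ring
          rw [hBq] at hA
          exact le_trans hA (le_max_right _ _)
      rw [Real.norm_eq_abs, abs_mul, abs_of_nonneg (Real.rpow_nonneg h0s.le _),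
        abs_of_nonneg (Real.rpow_nonneg h1s'.le _)]
      calc s ^ (a - β₂) * (1 - s) ^ (1 - α)
          ≤ s ^ (a - β₂) * max 1 ((2:ℝ) ^ (α - 1)) :=
            mul_le_mul_of_nonneg_left hb (Real.rpow_nonneg h0s.le _)
        _ = max 1 ((2:ℝ) ^ (α - 1)) * s ^ (a - β₂) := mul_comm _ _
    have hbase2 : IntegrableOn (fun s : ℝ => (1 - s) ^ (1 - α)) (Set.Ioc (1/2) 1) := by
      have h := (intervalIntegral.intervalIntegrable_rpow' (a := 0) (b := 1/2) hp2).comp_sub_left 1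
      rw [intervalIntegrable_iff] at h
      simp only [show (1:ℝ) - 0 = 1 by norm_num, show (1:ℝ) - 1/2 = 1/2 by norm_num] at h
      rwa [Set.uIoc_comm, Set.uIoc_of_le (by norm_num)] at h
    have hright : IntegrableOn (fun s : ℝ => s ^ (a - β₂) * (1 - s) ^ (1 - α))
        (Set.Ioc (1/2) 1) := by
      refine Integrable.mono' (hbase2.const_mul (((2:ℝ)⁻¹) ^ (a - β₂)))
        hGmeas.aestronglyMeasurable.restrict ?_
      filter_upwards [ae_restrict_mem measurableSet_Ioc] with s hs
      obtain ⟨h12, h1s⟩ := hs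
      have h0s : (0:ℝ) < s := by linarith
      have h1s' : (0:ℝ) ≤ 1 - s := by linarith
      have hb : s ^ (a - β₂) ≤ ((2:ℝ)⁻¹) ^ (a - β₂) :=
        Real.rpow_le_rpow_of_nonpos (by norm_num) (by linarith) hp1'
      rw [Real.norm_eq_abs, abs_mul, abs_of_nonneg (Real.rpow_nonneg h0s.le _),
        abs_of_nonneg (Real.rpow_nonneg h1s' _)]
      exact mul_le_mul_of_nonneg_right hb (Real.rpow_nonneg h1s' _)
    refine (hleft.union hright).mono_set ?_
    intro x hx
    rcases le_or_gt x (1/2) with h | h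
    · exact Or.inl ⟨hx.1, h⟩
    · exact Or.inr ⟨h, hx.2.le⟩
  have hint : IntegrableOn (CconstIntegrand n α q B) S := by
    have hdom : IntegrableOn (fun p : EuclideanSpace ℝ (Fin (n+1)) × ℝ =>
        M * ((‖p.1‖ ^ 2 + 1) ^ (β₂ - D) * (p.2 ^ (a - β₂) * (1 - p.2) ^ (1 - α)))) S := by
      rw [IntegrableOn, hrestr]
      exact (hF.mul_prod hG).const_mul M
    exact hdom.mono' hmeasf.aestronglyMeasurable.restrict
      ((ae_restrict_mem hS).mono (fun p hp => by rw [Real.norm_eq_abs]; exact key p hp))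
  refine ⟨hint, ?_, ?_⟩
  · -- Cconst = 0 → q = 0 ∨ q = α - 1
    intro hC0
    by_contra hne
    push_neg at hne
    obtain ⟨hq0, hqα⟩ := hne
    have hr0 : α - q - 1 ≠ 0 := fun h => hqα (by linarith)
    set ε : ℝ := (if 0 < q then (-1:ℝ) else 1) * (if 0 < α - q - 1 then (1:ℝ) else -1) with hε
    have hsign : ∀ p, p ∈ S → 0 < ε * CconstIntegrand n α q B p := by
      rintro ⟨u, s⟩ hp
      obtain ⟨h0s, h1s⟩ : (0:ℝ) < s ∧ s < 1 := hp.2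
      have h1s' : (0:ℝ) < 1 - s := by linarith
      have hd1 : (0:ℝ) < (1 - s) ^ (1 + α) := Real.rpow_pos_of_pos h1s' _
      have hd2 : (0:ℝ) < (‖u‖ ^ 2 + 1) ^ (((n:ℝ) + 2 + α)/2) :=
        Real.rpow_pos_of_pos (by positivity) _
      have hBv : 0 < B ((1 - s) • u, 1) (0, s) := hBpos _ _ (by norm_num) h0s
      have hP : 0 < ε * ((s ^ q - 1) * (1 - s ^ (α - q - 1))) := by
        rcases hq0.lt_or_gt with hq | hq <;> rcases hr0.lt_or_gt with hr | hr
        · have h1 : 1 < s ^ q := (Real.one_lt_rpow_iff_of_pos h0s).mpr (Or.inr ⟨h1s, hq⟩)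
          have h2 : 1 < s ^ (α - q - 1) :=
            (Real.one_lt_rpow_iff_of_pos h0s).mpr (Or.inr ⟨h1s, hr⟩)
          rw [hε, if_neg (not_lt.mpr hq.le), if_neg (not_lt.mpr hr.le)]
          have hPn := mul_neg_of_pos_of_neg (by linarith : (0:ℝ) < s ^ q - 1)
            (by linarith : 1 - s ^ (α - q - 1) < 0)
          linarith
        · have h1 : 1 < s ^ q := (Real.one_lt_rpow_iff_of_pos h0s).mpr (Or.inr ⟨h1s, hq⟩)
          have h2 : s ^ (α - q - 1) < 1 := Real.rpow_lt_one h0s.le h1s hr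
          rw [hε, if_neg (not_lt.mpr hq.le), if_pos hr]
          have hPp := mul_pos (by linarith : (0:ℝ) < s ^ q - 1)
            (by linarith : (0:ℝ) < 1 - s ^ (α - q - 1))
          linarith
        · have h1 : s ^ q < 1 := Real.rpow_lt_one h0s.le h1s hq
          have h2 : 1 < s ^ (α - q - 1) :=
            (Real.one_lt_rpow_iff_of_pos h0s).mpr (Or.inr ⟨h1s, hr⟩)
          rw [hε, if_pos hq, if_neg (not_lt.mpr hr.le)]
          have hPp := mul_pos_of_neg_of_neg (by linarith : s ^ q - 1 < 0)
            (by linarith : 1 - s ^ (α - q - 1) < 0)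
          linarith
        · have h1 : s ^ q < 1 := Real.rpow_lt_one h0s.le h1s hq
          have h2 : s ^ (α - q - 1) < 1 := Real.rpow_lt_one h0s.le h1s hr
          rw [hε, if_pos hq, if_pos hr]
          have hPn := mul_neg_of_neg_of_pos (by linarith : s ^ q - 1 < 0)
            (by linarith : (0:ℝ) < 1 - s ^ (α - q - 1))
          linarith
      have heq : ε * CconstIntegrand n α q B (u, s) =
          (ε * ((s ^ q - 1) * (1 - s ^ (α - q - 1)))) / (1 - s) ^ (1 + α) *
            B ((1 - s) • u, 1) (0, s) / (‖u‖ ^ 2 + 1) ^ (((n:ℝ) + 2 + α)/2) := by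
        simp only [CconstIntegrand]
        ring
      rw [heq]
      exact div_pos (mul_pos (div_pos hP hd1) hBv) hd2
    have hSpos : 0 < volume S := by
      rw [hSdef, Measure.volume_eq_prod, Measure.prod_prod]
      apply ENNReal.mul_pos
      · exact (isOpen_univ.measure_pos volume Set.univ_nonempty).ne'
      · rw [Real.volume_Ioo]
        simp
    have hposint : 0 < ∫ p in S, ε * CconstIntegrand n α q B p := by
      refine (setIntegral_pos_iff_support_of_nonneg_ae ?_ ?_).mpr ?_
      · exact (ae_restrict_mem hS).mono fun p hp => (hsign p hp).le
      · exact hint.const_mul ε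
      · exact lt_of_lt_of_le hSpos (measure_mono fun p hp => ⟨(hsign p hp).ne', hp⟩)
    rw [integral_const_mul] at hposint
    have hCc : (∫ p in S, CconstIntegrand n α q B p) = Cconst n α q B := rfl
    rw [hCc, hC0, mul_zero] at hposint
    exact lt_irrefl 0 hposint
  · -- q = 0 ∨ q = α - 1 → Cconst = 0
    rintro (rfl | rfl)
    · have hzero : CconstIntegrand n α 0 B = fun _ => 0 := by
        funext p
        simp [CconstIntegrand]
      rw [Cconst, hzero]
      simp
    · have hzero : CconstIntegrand n α (α - 1) B = fun _ => 0 := by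
        funext p
        have hexp : α - (α - 1) - 1 = 0 := by ring
        simp [CconstIntegrand, hexp]
      rw [Cconst, hzero]
      simp
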